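/- arXiv:2003.09600 — 5 statements merged into one kernel-verified Lean document; each statement's English description precedes it below -/
import Mathlib

section
/- Let d ≥ 1 and let Ω₁ be a nonempty bounded open subset of ℝ^d with boundary Γ = frontier(Ω₁), and let φ be the signed distance function of Γ. Then Ω₁ is a convex set if and only if φ is a convex function on ℝ^d. -/
/-!
For convex `Ω` the signed distance is the supremum of the affine functions `x ↦ ⟪u, x - p⟫`
over the half-spaces `{x | ⟪u, x - p⟫ ≤ 0}`, `‖u‖ = 1`, containing `Ω`, hence convex. Each such
function lies below `sdf Ω`: outside `Ω` because the frontier lies in the half-space, inside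
because the ball of radius `dist(x, ∂Ω)` about `x` stays in `Ω`. Conversely, projecting onto
`closure Ω` a point outside it close to the nearest frontier point of `x` (or `x` itself, if
`x ∉ closure Ω`) gives a supporting half-space whose affine function nearly attains `sdf Ω x`.
For the other direction, if `∂Ω ≠ ∅` then `Ω = {sdf Ω < 0}` is a sublevel set of a convex
function, and otherwise `Ω` is `∅` or the whole space.
-/

open Classical in
/-- Signed distance function of the boundary of an open set `Ω`:
negative distance to the frontier inside `Ω`, positive outside. -/
noncomputable def sdf {d : ℕ} (Ω : Set (EuclideanSpace ℝ (Fin d)))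
    (x : EuclideanSpace ℝ (Fin d)) : ℝ :=
  if x ∈ Ω then -(Metric.infDist x (frontier Ω)) else Metric.infDist x (frontier Ω)

open Set Metric
open scoped RealInnerProductSpace

theorem convexOn_of_forall_exists_convexOn_le {E : Type*} [AddCommGroup E] [Module ℝ E]
    {s : Set E} (hs : Convex ℝ s) {f : E → ℝ}
    (h : ∀ x ∈ s, ∀ ε > 0, ∃ g : E → ℝ, ConvexOn ℝ s g ∧ (∀ y ∈ s, g y ≤ f y) ∧ f x ≤ g x + ε) :
    ConvexOn ℝ s f := by
  refine ⟨hs, fun x hx y hy a b ha hb hab => le_of_forall_pos_le_add fun ε hε => ?_⟩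
  obtain ⟨g, hg, hgf, hfg⟩ := h _ (hs hx hy ha hb hab) ε hε
  calc f (a • x + b • y) ≤ g (a • x + b • y) + ε := hfg
    _ ≤ a • g x + b • g y + ε := by gcongr; exact hg.2 hx hy ha hb hab
    _ ≤ a • f x + b • f y + ε := by
      gcongr
      · exact hgf x hx
      · exact hgf y hy

section InnerProductSpace

variable {E : Type*} [NormedAddCommGroup E] [InnerProductSpace ℝ E]

theorem abs_inner_sub_le_dist {u : E} (hu : ‖u‖ = 1) (x y : E) : |⟪u, x - y⟫| ≤ dist x y := by
  simpa [hu, dist_eq_norm] using abs_real_inner_le_norm u (x - y)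

theorem convexOn_inner_sub (p u : E) : ConvexOn ℝ univ fun x : E => ⟪u, x - p⟫ := by
  refine (((innerₛₗ ℝ u).convexOn convex_univ).add_const (-⟪u, p⟫)).congr fun x _ => ?_
  rw [inner_sub_right, sub_eq_add_neg]
  rfl

def IsUnitOuterNormal (s : Set E) (p u : E) : Prop :=
  ‖u‖ = 1 ∧ ∀ c ∈ s, ⟪u, c - p⟫ ≤ 0

namespace IsUnitOuterNormal

variable {s : Set E} {p u : E}

theorem inner_sub_le_infDist (hn : IsUnitOuterNormal s p u) {t : Set E} (hts : t ⊆ s)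
    (ht : t.Nonempty) (z : E) : ⟪u, z - p⟫ ≤ infDist z t := by
  refine (le_infDist ht).2 fun g hg => ?_
  calc ⟪u, z - p⟫ = ⟪u, z - g⟫ + ⟪u, g - p⟫ := by rw [← inner_add_right, sub_add_sub_cancel]
    _ ≤ dist z g + 0 :=
      add_le_add (le_of_abs_le (abs_inner_sub_le_dist hn.1 z g)) (hn.2 g (hts hg))
    _ = dist z g := add_zero _

theorem inner_sub_add_le_zero (hn : IsUnitOuterNormal s p u) {z : E} {r : ℝ}
    (hz : z + r • u ∈ s) : ⟪u, z - p⟫ + r ≤ 0 := by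
  have := hn.2 _ hz
  rwa [add_sub_right_comm, inner_add_right, real_inner_smul_right, real_inner_self_eq_norm_sq,
    hn.1, one_pow, mul_one] at this

theorem notMem_interior (hn : IsUnitOuterNormal s p u) : p ∉ interior s := by
  intro hp
  obtain ⟨δ, hδ, hball⟩ := Metric.mem_nhds_iff.1 (mem_interior_iff_mem_nhds.1 hp)
  have hmem : p + (δ / 2) • u ∈ s := hball <| by
    rw [mem_ball, dist_eq_norm, add_sub_cancel_left, norm_smul, hn.1, mul_one,
      Real.norm_of_nonneg (by positivity)]
    linarith
  have := hn.inner_sub_add_le_zero hmem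
  rw [sub_self, inner_zero_right, zero_add] at this
  linarith

end IsUnitOuterNormal

theorem exists_isUnitOuterNormal_of_notMem {K : Set E} (hne : K.Nonempty) (hK : IsComplete K)
    (hconv : Convex ℝ K) {w : E} (hw : w ∉ K) :
    ∃ p ∈ K, ∃ u, IsUnitOuterNormal K p u ∧ ⟪u, w - p⟫ = ‖w - p‖ := by
  obtain ⟨p, hp, hproj⟩ := exists_norm_eq_iInf_of_complete_convex hne hK hconv w
  have hwp : 0 < ‖w - p‖ := norm_pos_iff.2 (sub_ne_zero.2 fun h => hw (h ▸ hp))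
  refine ⟨p, hp, ‖w - p‖⁻¹ • (w - p), ⟨?_, fun c hc => ?_⟩, ?_⟩
  · rw [norm_smul, norm_inv, norm_norm, inv_mul_cancel₀ hwp.ne']
  · rw [real_inner_smul_left]
    exact mul_nonpos_of_nonneg_of_nonpos (by positivity)
      ((norm_eq_iInf_iff_real_inner_le_zero hconv hp).1 hproj c hc)
  · rw [real_inner_smul_left, real_inner_self_eq_norm_sq]
    field_simp

end InnerProductSpace

section NormedSpace

variable {E : Type*} [NormedAddCommGroup E] [NormedSpace ℝ E] {Ω : Set E}

theorem ball_infDist_frontier_subset (hopen : IsOpen Ω) {x : E} (hx : x ∈ Ω) :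
    ball x (infDist x (frontier Ω)) ⊆ Ω := by
  rcases (infDist_nonneg (x := x) (s := frontier Ω)).eq_or_lt with h | h
  · rw [← h, ball_zero]
    exact empty_subset Ω
  refine (convex_ball x _).isPreconnected.subset_of_closure_inter_subset hopen
    ⟨x, mem_ball_self h, hx⟩ ?_
  rintro y ⟨hyc, hyb⟩
  by_contra hyΩ
  exact ball_infDist_subset_compl hyb (hopen.frontier_eq ▸ ⟨hyc, hyΩ⟩)

theorem add_infDist_frontier_smul_mem_closure (hopen : IsOpen Ω) {x u : E} (hx : x ∈ Ω)
    (hu : ‖u‖ = 1) : x + infDist x (frontier Ω) • u ∈ closure Ω := by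
  rcases (infDist_nonneg (x := x) (s := frontier Ω)).eq_or_lt with h | h
  · rw [← h, zero_smul, add_zero]
    exact subset_closure hx
  · refine closure_mono (ball_infDist_frontier_subset hopen hx) ?_
    rw [closure_ball x h.ne', mem_closedBall, dist_eq_norm, add_sub_cancel_left, norm_smul, hu,
      mul_one, Real.norm_of_nonneg h.le]

end NormedSpace

section SignedDistance

variable {d : ℕ} {Ω : Set (EuclideanSpace ℝ (Fin d))}

theorem sdf_of_mem {x : EuclideanSpace ℝ (Fin d)} (hx : x ∈ Ω) :
    sdf Ω x = -infDist x (frontier Ω) :=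
  if_pos hx

theorem sdf_of_notMem {x : EuclideanSpace ℝ (Fin d)} (hx : x ∉ Ω) :
    sdf Ω x = infDist x (frontier Ω) :=
  if_neg hx

theorem sdf_of_mem_closure (hopen : IsOpen Ω) {x : EuclideanSpace ℝ (Fin d)}
    (hx : x ∈ closure Ω) : sdf Ω x = -infDist x (frontier Ω) := by
  by_cases hxΩ : x ∈ Ω
  · exact sdf_of_mem hxΩ
  · have hxΓ : x ∈ frontier Ω := hopen.frontier_eq ▸ ⟨hx, hxΩ⟩
    rw [sdf_of_notMem hxΩ, infDist_zero_of_mem hxΓ, neg_zero]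

theorem sdf_eq_zero_of_frontier_eq_empty (hΓ : frontier Ω = ∅) : sdf Ω = 0 := by
  ext x
  by_cases hx : x ∈ Ω <;> simp [sdf, hx, hΓ]

theorem sdf_neg_iff (hopen : IsOpen Ω) (hΓ : (frontier Ω).Nonempty)
    {x : EuclideanSpace ℝ (Fin d)} : sdf Ω x < 0 ↔ x ∈ Ω := by
  by_cases hx : x ∈ Ω
  · have hxΓ : x ∉ frontier Ω := fun h => (hopen.frontier_eq ▸ h).2 hx
    simpa [sdf_of_mem hx, hx] using (isClosed_frontier.notMem_iff_infDist_pos hΓ).1 hxΓ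
  · simpa [sdf_of_notMem hx, hx] using infDist_nonneg (x := x) (s := frontier Ω)

theorem IsUnitOuterNormal.inner_sub_le_sdf (hopen : IsOpen Ω) (hΓ : (frontier Ω).Nonempty)
    {p u : EuclideanSpace ℝ (Fin d)} (hn : IsUnitOuterNormal (closure Ω) p u)
    (z : EuclideanSpace ℝ (Fin d)) : ⟪u, z - p⟫ ≤ sdf Ω z := by
  by_cases hz : z ∈ Ω
  · have := hn.inner_sub_add_le_zero (add_infDist_frontier_smul_mem_closure hopen hz hn.1)
    rw [sdf_of_mem hz]
    linarith
  · rw [sdf_of_notMem hz]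
    exact hn.inner_sub_le_infDist frontier_subset_closure hΓ z

theorem exists_isUnitOuterNormal_sdf_le_of_notMem_closure (hconv : Convex ℝ Ω)
    (hopen : IsOpen Ω) (hne : Ω.Nonempty) {z : EuclideanSpace ℝ (Fin d)} (hz : z ∉ closure Ω) :
    ∃ p u, IsUnitOuterNormal (closure Ω) p u ∧ sdf Ω z ≤ ⟪u, z - p⟫ := by
  obtain ⟨p, hp, u, hn, hzp⟩ := exists_isUnitOuterNormal_of_notMem hne.closure
    isClosed_closure.isComplete hconv.closure hz
  have hpΩ : p ∉ Ω := fun h => hn.notMem_interior (interior_maximal subset_closure hopen h)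
  refine ⟨p, u, hn, ?_⟩
  rw [sdf_of_notMem fun h => hz (subset_closure h), hzp, ← dist_eq_norm]
  exact infDist_le_dist_of_mem (hopen.frontier_eq ▸ ⟨hp, hpΩ⟩)

theorem exists_isUnitOuterNormal_sdf_lt_of_mem_closure (hconv : Convex ℝ Ω)
    (hopen : IsOpen Ω) (hΓ : (frontier Ω).Nonempty) {z : EuclideanSpace ℝ (Fin d)}
    (hz : z ∈ closure Ω) {ε : ℝ} (hε : 0 < ε) :
    ∃ p u, IsUnitOuterNormal (closure Ω) p u ∧ sdf Ω z < ⟪u, z - p⟫ + ε := by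
  have hne : Ω.Nonempty := closure_nonempty_iff.1 (hΓ.mono frontier_subset_closure)
  obtain ⟨g, hg, hzg⟩ :=
    (infDist_lt_iff hΓ).1 (lt_add_of_pos_right (infDist z (frontier Ω)) (half_pos hε))
  -- A convex open set is the interior of its closure, so `g` is a limit of points outside it.
  have hgC : g ∈ closure (closure Ω)ᶜ := by
    rw [closure_compl, hconv.interior_closure_eq_interior_of_nonempty_interior
      (by rwa [hopen.interior_eq]), hopen.interior_eq]
    exact (hopen.frontier_eq ▸ hg).2
  obtain ⟨w, hw, hgw⟩ := Metric.mem_closure_iff.1 hgC (ε / 2) (half_pos hε)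
  obtain ⟨p, -, u, hn, hwp⟩ := exists_isUnitOuterNormal_of_notMem hne.closure
    isClosed_closure.isComplete hconv.closure hw
  refine ⟨p, u, hn, ?_⟩
  have hzw : -dist z w ≤ ⟪u, z - w⟫ := neg_le_of_abs_le (abs_inner_sub_le_dist hn.1 z w)
  calc sdf Ω z = -infDist z (frontier Ω) := sdf_of_mem_closure hopen hz
    _ < -dist z w + ε := by linarith [dist_triangle z g w]
    _ ≤ ⟪u, z - w⟫ + ⟪u, w - p⟫ + ε := by linarith [norm_nonneg (w - p)]
    _ = ⟪u, z - p⟫ + ε := by rw [← inner_add_right, sub_add_sub_cancel]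

theorem convexOn_sdf (hconv : Convex ℝ Ω) (hopen : IsOpen Ω) : ConvexOn ℝ univ (sdf Ω) := by
  rcases (frontier Ω).eq_empty_or_nonempty with hΓ | hΓ
  · rw [sdf_eq_zero_of_frontier_eq_empty hΓ]
    exact convexOn_const 0 convex_univ
  refine convexOn_of_forall_exists_convexOn_le convex_univ fun z _ ε hε => ?_
  obtain ⟨p, u, hn, hz⟩ :
      ∃ p u, IsUnitOuterNormal (closure Ω) p u ∧ sdf Ω z < ⟪u, z - p⟫ + ε := by
    by_cases hz : z ∈ closure Ω
    · exact exists_isUnitOuterNormal_sdf_lt_of_mem_closure hconv hopen hΓ hz hε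
    · obtain ⟨p, u, hn, hle⟩ := exists_isUnitOuterNormal_sdf_le_of_notMem_closure hconv hopen
        (closure_nonempty_iff.1 (hΓ.mono frontier_subset_closure)) hz
      exact ⟨p, u, hn, by linarith⟩
  exact ⟨fun x => ⟪u, x - p⟫, convexOn_inner_sub p u,
    fun y _ => hn.inner_sub_le_sdf hopen hΓ y, hz.le⟩

theorem convex_of_convexOn_sdf (hopen : IsOpen Ω) (h : ConvexOn ℝ univ (sdf Ω)) : Convex ℝ Ω := by
  rcases (frontier Ω).eq_empty_or_nonempty with hΓ | hΓ
  · rcases frontier_eq_empty_iff.1 hΓ with rfl | rfl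
    · exact convex_empty
    · exact convex_univ
  · simpa only [mem_univ, true_and, sdf_neg_iff hopen hΓ, ofPred_mem_eq] using h.convex_lt 0

end SignedDistance

theorem stmt_0_general {d : ℕ} (Ω₁ : Set (EuclideanSpace ℝ (Fin d)))
    (hopen : IsOpen Ω₁) :
    Convex ℝ Ω₁ ↔ ConvexOn ℝ Set.univ (sdf Ω₁) :=
  ⟨fun hconv => convexOn_sdf hconv hopen, convex_of_convexOn_sdf hopen⟩

/-- For a nonempty bounded open set `Ω₁ ⊆ ℝ^d` (`d ≥ 1`) with signed
distance function `φ`, `Ω₁` is convex iff `φ` is convex on `ℝ^d`. -/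
theorem stmt_0 {d : ℕ} (hd : 1 ≤ d) (Ω₁ : Set (EuclideanSpace ℝ (Fin d)))
    (hne : Ω₁.Nonempty) (hbdd : Bornology.IsBounded Ω₁) (hopen : IsOpen Ω₁) :
    Convex ℝ Ω₁ ↔ ConvexOn ℝ Set.univ (sdf Ω₁) :=
  stmt_0_general Ω₁ hopen
end

section
/- Let Ω₁ be a nonempty bounded open convex subset of ℝ^d with boundary Γ = frontier(Ω₁), and let φ be the signed distance function of Γ. If x₁ and x₂ belong to the closure of Ω₁, then for every θ ∈ [0,1], θx₁ + (1−θ)x₂ belongs to the closure of Ω₁ and φ(θx₁ + (1−θ)x₂) ≤ θφ(x₁) + (1−θ)φ(x₂). -/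
open Metric Set Pointwise

/-- Crossing lemma: from a point of the closure to a point outside, there is a frontier point
at distance no larger. -/
lemma sdf_cross {d : ℕ} {Ω : Set (EuclideanSpace ℝ (Fin d))} (hopen : IsOpen Ω)
    {x y : EuclideanSpace ℝ (Fin d)} (hx : x ∈ closure Ω) (hy : y ∉ Ω) :
    ∃ z ∈ frontier Ω, dist x z ≤ dist x y := by
  by_cases hxΩ : x ∈ Ω
  · by_cases hyc : y ∈ closure Ω
    · exact ⟨y, ⟨hyc, by rwa [hopen.interior_eq]⟩, le_rfl⟩
    · by_contra h
      push_neg at h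
      have hdisj : ∀ z ∈ segment ℝ x y, z ∉ frontier Ω := by
        intro z hz hzf
        have h1 := dist_add_dist_of_mem_segment hz
        have h2 := h z hzf
        have h3 : (0:ℝ) ≤ dist z y := dist_nonneg
        linarith
      have hseg : IsPreconnected (segment ℝ x y) := (convex_segment x y).isPreconnected
      have hcov : segment ℝ x y ⊆ Ω ∪ (closure Ω)ᶜ := by
        intro z hz
        by_cases hzc : z ∈ closure Ω
        · left
          rcases (closure_eq_self_union_frontier Ω ▸ hzc) with h' | h'
          · exact h'
          · exact absurd h' (hdisj z hz)
        · exact Or.inr hzc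
      obtain ⟨z, ⟨hzs, hz1⟩, hz2⟩ := hseg Ω (closure Ω)ᶜ hopen isClosed_closure.isOpen_compl
        hcov ⟨x, left_mem_segment ℝ x y, hxΩ⟩ ⟨y, right_mem_segment ℝ x y, hyc⟩
      obtain ⟨hzΩ, hzc⟩ := hz2
      exact hzc (subset_closure hzΩ)
  · exact ⟨x, ⟨hx, by rwa [hopen.interior_eq]⟩, by simp [dist_nonneg]⟩

/-- The open ball of radius `infDist x (frontier Ω)` around a point of the closure is in `Ω`. -/
lemma sdf_ball_subset {d : ℕ} {Ω : Set (EuclideanSpace ℝ (Fin d))} (hopen : IsOpen Ω)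
    {x : EuclideanSpace ℝ (Fin d)} (hx : x ∈ closure Ω) :
    ball x (infDist x (frontier Ω)) ⊆ Ω := by
  intro y hy
  by_contra hyΩ
  obtain ⟨z, hz, hle⟩ := sdf_cross hopen hx hyΩ
  have h1 := infDist_le_dist_of_mem (x := x) hz
  have h2 : dist x y < infDist x (frontier Ω) := by rwa [mem_ball, dist_comm] at hy
  linarith

lemma sdf_closedBall_subset {d : ℕ} {Ω : Set (EuclideanSpace ℝ (Fin d))} (hopen : IsOpen Ω)
    {x : EuclideanSpace ℝ (Fin d)} (hx : x ∈ closure Ω) :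
    closedBall x (infDist x (frontier Ω)) ⊆ closure Ω := by
  rcases eq_or_lt_of_le (infDist_nonneg (x := x) (s := frontier Ω)) with h | h
  · rw [← h, closedBall_zero]
    exact singleton_subset_iff.mpr hx
  · rw [← closure_ball x (ne_of_gt h)]
    exact closure_mono (sdf_ball_subset hopen hx)

/-- For a nonempty open convex set, the interior of the closure is the set itself. -/
lemma sdf_interior_closure {d : ℕ} {Ω : Set (EuclideanSpace ℝ (Fin d))}
    (hne : Ω.Nonempty) (hopen : IsOpen Ω) (hconv : Convex ℝ Ω) :
    interior (closure Ω) = Ω := by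
  apply Subset.antisymm
  · obtain ⟨x₀, hx₀⟩ := hne
    have hx₀i : x₀ ∈ interior Ω := by rwa [hopen.interior_eq]
    intro x hx
    obtain ⟨ε, hε, hball⟩ := Metric.isOpen_iff.mp isOpen_interior x hx
    have hball' : ball x ε ⊆ closure Ω := hball.trans interior_subset
    set n : ℝ := ‖x - x₀‖ with hn
    have hn0 : 0 ≤ n := norm_nonneg _
    set t : ℝ := ε / (2 * (n + 1)) with ht
    have ht0 : 0 < t := by positivity
    set z : EuclideanSpace ℝ (Fin d) := x + t • (x - x₀) with hz
    have hzball : z ∈ ball x ε := by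
      rw [mem_ball, dist_comm, dist_eq_norm]
      have : x - z = (-t) • (x - x₀) := by rw [hz]; module
      rw [this, norm_smul, norm_neg, Real.norm_of_nonneg ht0.le]
      rw [ht, div_mul_eq_mul_div, div_lt_iff₀ (by positivity)]
      nlinarith
    have hzc : z ∈ closure Ω := hball' hzball
    have h1t : (0:ℝ) < 1 + t := by linarith
    have hx_eq : (t / (1 + t)) • x₀ + (1 / (1 + t)) • z = x := by
      rw [hz]
      match_scalars <;> field_simp <;> ring
    have := hconv.combo_interior_closure_mem_interior hx₀i hzc
      (by positivity : 0 < t / (1 + t)) (by positivity : (0:ℝ) ≤ 1 / (1 + t))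
      (by field_simp; ring)
    rw [hx_eq, hopen.interior_eq] at this
    exact this
  · exact hopen.subset_interior_iff.mpr subset_closure

lemma sdf_eq_neg {d : ℕ} {Ω : Set (EuclideanSpace ℝ (Fin d))} (hopen : IsOpen Ω)
    {x : EuclideanSpace ℝ (Fin d)} (hx : x ∈ closure Ω) :
    sdf Ω x = -(infDist x (frontier Ω)) := by
  unfold sdf
  split_ifs with h
  · rfl
  · have hf : x ∈ frontier Ω := ⟨hx, by rwa [hopen.interior_eq]⟩
    rw [infDist_zero_of_mem hf]
    simp

/-- convexity inequality for the SDF at two points of `closure Ω₁`. -/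
theorem stmt_4 {d : ℕ} (Ω₁ : Set (EuclideanSpace ℝ (Fin d)))
    (hne : Ω₁.Nonempty) (hbdd : Bornology.IsBounded Ω₁) (hopen : IsOpen Ω₁)
    (hconv : Convex ℝ Ω₁) (x₁ x₂ : EuclideanSpace ℝ (Fin d))
    (hx₁ : x₁ ∈ closure Ω₁) (hx₂ : x₂ ∈ closure Ω₁) :
    ∀ θ : ℝ, 0 ≤ θ → θ ≤ 1 →
      θ • x₁ + (1 - θ) • x₂ ∈ closure Ω₁ ∧
        sdf Ω₁ (θ • x₁ + (1 - θ) • x₂) ≤ θ * sdf Ω₁ x₁ + (1 - θ) * sdf Ω₁ x₂ := by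
  intro θ hθ0 hθ1
  have h1θ : (0:ℝ) ≤ 1 - θ := by linarith
  set Γ := frontier Ω₁ with hΓ
  set r₁ := infDist x₁ Γ with hr₁
  set r₂ := infDist x₂ Γ with hr₂
  have hr₁0 : 0 ≤ r₁ := infDist_nonneg
  have hr₂0 : 0 ≤ r₂ := infDist_nonneg
  set x := θ • x₁ + (1 - θ) • x₂ with hxdef
  have hmem : x ∈ closure Ω₁ := hconv.closure hx₁ hx₂ hθ0 h1θ (by ring)
  refine ⟨hmem, ?_⟩
  set R := θ * r₁ + (1 - θ) * r₂ with hR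
  have hR0 : 0 ≤ R := by positivity
  -- closedBall x R ⊆ closure Ω₁ via Minkowski sums
  have hcb : closedBall x R ⊆ closure Ω₁ := by
    have h1 : θ • closedBall x₁ r₁ + (1 - θ) • closedBall x₂ r₂ ⊆ closure Ω₁ := by
      refine Subset.trans (Set.add_subset_add (smul_set_mono (sdf_closedBall_subset hopen hx₁))
        (smul_set_mono (sdf_closedBall_subset hopen hx₂))) ?_
      exact hconv.closure.set_combo_subset hθ0 h1θ (by ring)
    have h2 : θ • closedBall x₁ r₁ + (1 - θ) • closedBall x₂ r₂ = closedBall x R := by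
      rw [smul_closedBall _ _ hr₁0, smul_closedBall _ _ hr₂0,
        closedBall_add_closedBall (by positivity) (by positivity),
        Real.norm_of_nonneg hθ0, Real.norm_of_nonneg h1θ]
    rw [← h2]
    exact h1
  have hballΩ : ball x R ⊆ Ω₁ := by
    rw [← sdf_interior_closure hne hopen hconv]
    rw [isOpen_ball.subset_interior_iff]
    exact ball_subset_closedBall.trans hcb
  have hkey : R ≤ infDist x Γ := by
    rcases Γ.eq_empty_or_nonempty with hΓe | hΓne
    · have e1 : r₁ = 0 := by rw [hr₁, hΓe, infDist_empty]
      have e2 : r₂ = 0 := by rw [hr₂, hΓe, infDist_empty]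
      rw [hR, e1, e2]
      simpa using infDist_nonneg
    · by_contra h
      push_neg at h
      obtain ⟨z, hzΓ, hzd⟩ := (infDist_lt_iff hΓne).mp h
      have hzball : z ∈ ball x R := by rwa [mem_ball, dist_comm]
      have hzΩ : z ∈ Ω₁ := hballΩ hzball
      have : z ∉ interior Ω₁ := hzΓ.2
      rw [hopen.interior_eq] at this
      exact this hzΩ
  rw [sdf_eq_neg hopen hmem, sdf_eq_neg hopen hx₁, sdf_eq_neg hopen hx₂]
  rw [← hΓ, ← hr₁, ← hr₂]
  nlinarith [hkey]
end

section
/- Let C₁ and C₂ be nonempty compact subsets of ℝ^d, each equal to the closure of its interior, with boundaries Γ₁ = frontier(C₁) and Γ₂ = frontier(C₂), and let φ₁ and φ₂ be the signed distance functions of C₁ and C₂ respectively. Then C₁ ⊆ C₂ if and only if φ₁(x) ≥ φ₂(x) for every x ∈ ℝ^d. -/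
open Classical in
/-- Signed distance function of a compact set `C`: negative distance to the frontier
on `interior C`, positive distance otherwise. -/
noncomputable def sdfC {d : ℕ} (C : Set (EuclideanSpace ℝ (Fin d)))
    (x : EuclideanSpace ℝ (Fin d)) : ℝ :=
  if x ∈ interior C then -(Metric.infDist x (frontier C)) else Metric.infDist x (frontier C)

/-- A segment joining a point of `C` to a point outside `C` meets `frontier C`. -/
lemma seg_meets_frontier {E : Type*} [NormedAddCommGroup E] [NormedSpace ℝ E]
    (C : Set E) {x y : E} (hx : x ∈ C) (hy : y ∉ C) :
    ∃ z ∈ frontier C, z ∈ segment ℝ x y := by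
  have hconn : IsPreconnected (segment ℝ x y) := (convex_segment x y).isPreconnected
  have := isPreconnected_closed_iff.1 hconn (closure C) (closure Cᶜ)
    isClosed_closure isClosed_closure
    (by intro z _; by_cases hz : z ∈ C
        · exact Or.inl (subset_closure hz)
        · exact Or.inr (subset_closure hz))
    ⟨x, left_mem_segment ℝ x y, subset_closure hx⟩
    ⟨y, right_mem_segment ℝ x y, subset_closure hy⟩
  obtain ⟨z, hz⟩ := this
  refine ⟨z, ?_, hz.1⟩
  rw [frontier_eq_closure_inter_closure]
  exact ⟨hz.2.1, hz.2.2⟩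

/-- The distance from `x` inside `C` to the frontier is at most the distance to any
point outside `C`. -/
lemma infDist_frontier_le_dist {E : Type*} [NormedAddCommGroup E] [NormedSpace ℝ E]
    (C : Set E) {x y : E} (hx : x ∈ C) (hy : y ∉ C) :
    Metric.infDist x (frontier C) ≤ dist x y := by
  obtain ⟨z, hzf, hzs⟩ := seg_meets_frontier C hx hy
  calc Metric.infDist x (frontier C) ≤ dist x z := Metric.infDist_le_dist_of_mem hzf
    _ ≤ dist x y := by
        have := dist_add_dist_of_mem_segment hzs
        have h0 : (0:ℝ) ≤ dist z y := dist_nonneg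
        linarith

lemma le_infDist' {E : Type*} [PseudoMetricSpace E] {s : Set E} {x : E} {c : ℝ}
    (hs : s.Nonempty) (h : ∀ y ∈ s, c ≤ dist x y) : c ≤ Metric.infDist x s := by
  by_contra hlt
  push_neg at hlt
  rw [Metric.infDist_lt_iff hs] at hlt
  obtain ⟨y, hy, hlt⟩ := hlt
  exact absurd (h y hy) (not_le.2 hlt)

/-- for two nonempty compact sets, each the closure of its interior,
`C₁ ⊆ C₂` iff `φ₁ ≥ φ₂` everywhere. -/
theorem stmt_11 {d : ℕ} (C₁ C₂ : Set (EuclideanSpace ℝ (Fin d)))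
    (hne₁ : C₁.Nonempty) (hne₂ : C₂.Nonempty)
    (hcpt₁ : IsCompact C₁) (hcpt₂ : IsCompact C₂)
    (hreg₁ : C₁ = closure (interior C₁)) (hreg₂ : C₂ = closure (interior C₂)) :
    C₁ ⊆ C₂ ↔ ∀ x : EuclideanSpace ℝ (Fin d), sdfC C₂ x ≤ sdfC C₁ x := by
  have hcl₁ : IsClosed C₁ := hcpt₁.isClosed
  have hcl₂ : IsClosed C₂ := hcpt₂.isClosed
  constructor
  · -- C₁ ⊆ C₂ → sdf inequality
    intro hsub x
    rcases subsingleton_or_nontrivial (EuclideanSpace ℝ (Fin d)) with hss | hnt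
    · -- subsingleton space: both sets are univ, frontiers empty
      have h1 : C₁ = Set.univ := by
        apply Set.eq_univ_of_forall; intro z
        obtain ⟨w, hw⟩ := hne₁; rwa [Subsingleton.elim z w]
      have h2 : C₂ = Set.univ := by
        apply Set.eq_univ_of_forall; intro z
        obtain ⟨w, hw⟩ := hne₂; rwa [Subsingleton.elim z w]
      simp [sdfC, h1, h2]
    · have hΓ₁ : (frontier C₁).Nonempty := by
        rw [nonempty_frontier_iff]
        refine ⟨hne₁, fun h => ?_⟩
        rw [h] at hcpt₁
        exact (not_compactSpace_iff.2 inferInstance) (isCompact_univ_iff.1 hcpt₁)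
      have hΓ₂ : (frontier C₂).Nonempty := by
        rw [nonempty_frontier_iff]
        refine ⟨hne₂, fun h => ?_⟩
        rw [h] at hcpt₂
        exact (not_compactSpace_iff.2 inferInstance) (isCompact_univ_iff.1 hcpt₂)
      by_cases hx₁ : x ∈ interior C₁
      · -- x in interior of both; need infDist x Γ₁ ≤ infDist x Γ₂
        have hx₂ : x ∈ interior C₂ := interior_mono hsub hx₁
        have hc₂ : (C₂ᶜ).Nonempty := by
          rw [Set.nonempty_compl]
          intro h'
          rw [h'] at hcpt₂
          exact (not_compactSpace_iff.2 inferInstance) (isCompact_univ_iff.1 hcpt₂)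
        have key : Metric.infDist x (frontier C₁) ≤ Metric.infDist x (frontier C₂) := by
          have h1 : Metric.infDist x (frontier C₁) ≤ Metric.infDist x C₁ᶜ := by
            refine le_infDist' (hc₂.mono (Set.compl_subset_compl.2 hsub)) fun y hy => ?_
            exact infDist_frontier_le_dist C₁ (interior_subset hx₁) hy
          have h2 : Metric.infDist x C₁ᶜ ≤ Metric.infDist x C₂ᶜ :=
            Metric.infDist_le_infDist_of_subset (Set.compl_subset_compl.2 hsub) hc₂
          have h3 : Metric.infDist x C₂ᶜ ≤ Metric.infDist x (frontier C₂) := by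
            have hsub' : frontier C₂ ⊆ closure C₂ᶜ := by
              rw [frontier_eq_closure_inter_closure]; exact fun z hz => hz.2
            calc Metric.infDist x C₂ᶜ = Metric.infDist x (closure C₂ᶜ) :=
                  (Metric.infDist_closure).symm
              _ ≤ Metric.infDist x (frontier C₂) :=
                  Metric.infDist_le_infDist_of_subset hsub' hΓ₂
          linarith
        simp only [sdfC, if_pos hx₁, if_pos hx₂]
        linarith
      · -- x ∉ interior C₁
        have hs₁ : sdfC C₁ x = Metric.infDist x (frontier C₁) := by
          simp [sdfC, hx₁]
        by_cases hx₂ : x ∈ interior C₂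
        · have : sdfC C₂ x = -(Metric.infDist x (frontier C₂)) := by simp [sdfC, hx₂]
          rw [this, hs₁]
          have h0 : (0:ℝ) ≤ Metric.infDist x (frontier C₂) := Metric.infDist_nonneg
          have h1 : (0:ℝ) ≤ Metric.infDist x (frontier C₁) := Metric.infDist_nonneg
          linarith
        · have hs₂ : sdfC C₂ x = Metric.infDist x (frontier C₂) := by
            simp [sdfC, hx₂]
          rw [hs₁, hs₂]
          by_cases hxC₂ : x ∈ C₂
          · have : x ∈ frontier C₂ := by
              rw [hcl₂.frontier_eq]; exact ⟨hxC₂, hx₂⟩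
            rw [Metric.infDist_zero_of_mem this]
            exact Metric.infDist_nonneg
          · have hxC₁ : x ∉ C₁ := fun h => hxC₂ (hsub h)
            have h1 : Metric.infDist x (frontier C₂) ≤ Metric.infDist x C₂ := by
              refine le_infDist' hne₂ fun y hy => ?_
              have := infDist_frontier_le_dist C₂ᶜ (Set.mem_compl hxC₂)
                (by simpa using hy)
              rwa [frontier_compl] at this
            have h2 : Metric.infDist x C₂ ≤ Metric.infDist x C₁ :=
              Metric.infDist_le_infDist_of_subset hsub hne₁
            have h3 : Metric.infDist x C₁ ≤ Metric.infDist x (frontier C₁) := by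
              have hΓ₁' : (frontier C₁).Nonempty := hΓ₁
              exact Metric.infDist_le_infDist_of_subset
                (hcl₁.frontier_subset) hΓ₁'
            linarith
  · -- sdf inequality → C₁ ⊆ C₂
    intro h x hx
    by_contra hxC₂
    have hΓ₂ : (frontier C₂).Nonempty := by
      rw [nonempty_frontier_iff]
      exact ⟨hne₂, fun h' => hxC₂ (h' ▸ Set.mem_univ x)⟩
    have hpos : 0 < Metric.infDist x (frontier C₂) :=
      (isClosed_frontier.notMem_iff_infDist_pos hΓ₂).1
        (fun hm => hxC₂ (hcl₂.frontier_subset hm))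
    have hx₂ : x ∉ interior C₂ := fun h' => hxC₂ (interior_subset h')
    have hs₂ : sdfC C₂ x = Metric.infDist x (frontier C₂) := by simp [sdfC, hx₂]
    have hs₁ : sdfC C₁ x ≤ 0 := by
      by_cases hx₁ : x ∈ interior C₁
      · simp only [sdfC, if_pos hx₁]
        have := Metric.infDist_nonneg (x := x) (s := frontier C₁)
        linarith
      · have : x ∈ frontier C₁ := by rw [hcl₁.frontier_eq]; exact ⟨hx, hx₁⟩
        simp only [sdfC, if_neg hx₁, Metric.infDist_zero_of_mem this, le_refl]
    have := h x
    rw [hs₂] at this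
    linarith
end

section
/- Let Ω₁ be a nonempty bounded open convex subset of ℝ^d with boundary Γ = frontier(Ω₁), and let φ be the signed distance function of Γ. Then for every real number α, the sublevel set L_α^−(φ) = {x ∈ ℝ^d : φ(x) < α} is a convex set. -/
open Set Set.Notation Metric

/-- A preconnected set meeting both an open set and its complement meets its frontier. -/
lemma aux_le_infDist {X : Type*} [PseudoMetricSpace X] {s : Set X} (hs : s.Nonempty)
    {x : X} {b : ℝ} (h : ∀ z ∈ s, b ≤ dist x z) : b ≤ infDist x s := by
  rw [infDist_eq_iInf]
  haveI := hs.to_subtype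
  exact le_ciInf fun z => h z z.2

lemma aux_frontier_meet {X : Type*} [TopologicalSpace X] {u s : Set X}
    (hu : IsOpen u) (hs : IsPreconnected s) (hx : (s ∩ u).Nonempty)
    (hy : (s ∩ uᶜ).Nonempty) : (s ∩ frontier u).Nonempty := by
  by_contra h
  rw [Set.not_nonempty_iff_eq_empty] at h
  have hdisj : Disjoint (frontier u) s := by
    rw [Set.disjoint_iff_inter_eq_empty, Set.inter_comm]; exact h
  have hclopen := isClopen_preimage_val hu hdisj
  haveI := Subtype.preconnectedSpace hs
  obtain ⟨x, hxs, hxu⟩ := hx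
  have huniv : (s ↓∩ u) = Set.univ :=
    hclopen.eq_univ ⟨⟨x, hxs⟩, hxu⟩
  obtain ⟨y, hys, hyu⟩ := hy
  have : (⟨y, hys⟩ : s) ∈ (s ↓∩ u) := huniv ▸ Set.mem_univ _
  exact hyu this

/-- Points on a segment from `x` are at most `dist x z` away. -/
lemma aux_dist_seg {E : Type*} [NormedAddCommGroup E] [NormedSpace ℝ E]
    {x z w : E} (hw : w ∈ segment ℝ x z) : dist x w ≤ dist x z := by
  have := dist_add_dist_of_mem_segment hw
  nlinarith [dist_nonneg (x := w) (y := z)]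

lemma aux_infDist_frontier_in {d : ℕ} {Ω₁ : Set (EuclideanSpace ℝ (Fin d))}
    (hopen : IsOpen Ω₁) (hfne : (frontier Ω₁).Nonempty)
    {x : EuclideanSpace ℝ (Fin d)} (hx : x ∈ Ω₁) :
    infDist x (frontier Ω₁) = infDist x Ω₁ᶜ := by
  have hsub : frontier Ω₁ ⊆ Ω₁ᶜ := by
    rw [hopen.frontier_eq]; exact fun z hz => hz.2
  refine le_antisymm (aux_le_infDist (hfne.mono hsub) fun z hz => ?_)
    (infDist_le_infDist_of_subset hsub hfne)
  obtain ⟨w, hws, hwf⟩ := aux_frontier_meet hopen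
    ((convex_segment x z).isPreconnected) ⟨x, left_mem_segment ℝ x z, hx⟩
    ⟨z, right_mem_segment ℝ x z, hz⟩
  exact le_trans (infDist_le_dist_of_mem hwf) (aux_dist_seg hws)

lemma aux_infDist_frontier_out {d : ℕ} {Ω₁ : Set (EuclideanSpace ℝ (Fin d))}
    (hopen : IsOpen Ω₁) (hne : Ω₁.Nonempty) (hfne : (frontier Ω₁).Nonempty)
    {x : EuclideanSpace ℝ (Fin d)} (hx : x ∉ Ω₁) :
    infDist x (frontier Ω₁) = infDist x (closure Ω₁) := by
  refine le_antisymm (aux_le_infDist hne.closure fun z hz => ?_)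
    (infDist_le_infDist_of_subset (frontier_subset_closure) hfne)
  rcases (em (z ∈ Ω₁)) with hzin | hzout
  · obtain ⟨w, hws, hwf⟩ := aux_frontier_meet hopen
      ((convex_segment x z).isPreconnected) ⟨z, right_mem_segment ℝ x z, hzin⟩
      ⟨x, left_mem_segment ℝ x z, hx⟩
    exact le_trans (infDist_le_dist_of_mem hwf) (aux_dist_seg hws)
  · have : z ∈ frontier Ω₁ := ⟨hz, fun h => hzout (interior_subset (hopen.interior_eq ▸ h))⟩
    exact infDist_le_dist_of_mem this

/-- every strict sublevel set of the SDF of a nonempty bounded open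
convex set is convex. -/
theorem stmt_15 {d : ℕ} (Ω₁ : Set (EuclideanSpace ℝ (Fin d)))
    (hne : Ω₁.Nonempty) (hbdd : Bornology.IsBounded Ω₁) (hopen : IsOpen Ω₁)
    (hconv : Convex ℝ Ω₁) :
    ∀ α : ℝ, Convex ℝ {x : EuclideanSpace ℝ (Fin d) | sdf Ω₁ x < α} := by
  intro α
  by_cases huniv : Ω₁ = Set.univ
  · subst huniv
    have : ∀ x : EuclideanSpace ℝ (Fin d), sdf Set.univ x = 0 := by
      intro x; simp [sdf, frontier_univ]
    simp only [this]
    by_cases hα : (0:ℝ) < α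
    · have : {x : EuclideanSpace ℝ (Fin d) | (0:ℝ) < α} = Set.univ := by
        ext x; simp [hα]
      rw [this]; exact convex_univ
    · have : {x : EuclideanSpace ℝ (Fin d) | (0:ℝ) < α} = ∅ := by
        ext x; simp [hα]
      rw [this]; exact convex_empty
  have hcne : Ω₁ᶜ.Nonempty := by
    rw [Set.nonempty_compl]; exact huniv
  have hfne : (frontier Ω₁).Nonempty :=
    nonempty_frontier_iff.mpr ⟨hne, huniv⟩
  by_cases hα : 0 < α
  · -- the sublevel set is the α-thickening of the closure
    have heq : {x : EuclideanSpace ℝ (Fin d) | sdf Ω₁ x < α}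
        = Metric.thickening α (closure Ω₁) := by
      ext x
      simp only [Set.mem_setOf_eq, mem_thickening_iff_infDist_lt hne.closure, sdf]
      by_cases hx : x ∈ Ω₁
      · simp only [hx, if_true]
        constructor
        · intro _
          calc infDist x (closure Ω₁) ≤ dist x x :=
                infDist_le_dist_of_mem (subset_closure hx)
            _ = 0 := dist_self x
            _ < α := hα
        · intro _
          have := infDist_nonneg (x := x) (s := frontier Ω₁)
          linarith
      · simp only [hx, if_false]
        rw [aux_infDist_frontier_out hopen hne hfne hx]
    rw [heq]
    exact hconv.closure.thickening α
  · -- the sublevel set is an intersection of translates of Ω₁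
    push_neg at hα
    have heq : {x : EuclideanSpace ℝ (Fin d) | sdf Ω₁ x < α}
        = {x : EuclideanSpace ℝ (Fin d) | ∀ v : EuclideanSpace ℝ (Fin d),
            ‖v‖ ≤ -α → x + v ∈ Ω₁} := by
      ext x
      simp only [Set.mem_setOf_eq, sdf]
      constructor
      · intro hlt v hv
        have hx : x ∈ Ω₁ := by
          by_contra hx
          simp only [hx, if_false] at hlt
          have := infDist_nonneg (x := x) (s := frontier Ω₁)
          linarith
        simp only [hx, if_true] at hlt
        rw [aux_infDist_frontier_in hopen hfne hx] at hlt
        by_contra hxv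
        have h1 : infDist x Ω₁ᶜ ≤ dist x (x + v) := infDist_le_dist_of_mem hxv
        rw [dist_self_add_right] at h1
        linarith
      · intro hv
        have hx : x ∈ Ω₁ := by
          have := hv 0 (by simp; linarith)
          simpa using this
        simp only [hx, if_true]
        rw [aux_infDist_frontier_in hopen hfne hx]
        obtain ⟨y, hy, hyd⟩ := (isClosed_compl_iff.mpr hopen).exists_infDist_eq_dist hcne x
        rw [hyd]
        by_contra hle
        push_neg at hle
        have h1 : ‖y - x‖ ≤ -α := by
          rw [← dist_eq_norm, dist_comm]; linarith
        have := hv (y - x) h1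
        rw [add_sub_cancel] at this
        exact hy this
    rw [heq]
    intro x hx y hy a b ha hb hab
    intro v hv
    have h1 := hx v hv
    have h2 := hy v hv
    have : (a • x + b • y) + v = a • (x + v) + b • (y + v) := by
      calc a • x + b • y + v = a • x + b • y + (a + b) • v := by rw [hab, one_smul]
        _ = a • (x + v) + b • (y + v) := by rw [add_smul, smul_add, smul_add]; abel
    rw [this]
    exact hconv h1 h2 ha hb hab
end

section
/- Let Γ be a nonempty closed subset of ℝ^d and let x ∈ ℝ^d with x ∉ Γ. If the function y ↦ dist(y, Γ) is (Fréchet) differentiable at x, then its derivative at x has operator norm equal to 1; consequently the signed distance function of a nonempty bounded open set Ω₁ satisfies the Eikonal equation ‖∇φ(x)‖₂ = 1 at every point x ∉ frontier(Ω₁) where φ is differentiable. -/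
/-!
Along the segment from `x` to a nearest point `z ∈ Γ`, the distance to `Γ` decreases at unit
speed: it equals `(1 - t) * dist x z` at `lineMap x z t`. Hence the derivative sends `z - x` to
`-‖z - x‖`, so its norm is at least `1`, while `1`-Lipschitz continuity of `infDist` bounds it by
`1`. Off the frontier the signed distance function is locally `±infDist · (frontier Ω)`, and the
frontier of a nonempty bounded set in a nontrivial space is nonempty.
-/

open Metric Set AffineMap Topology

section NormedSpace

variable {E : Type*} [NormedAddCommGroup E] [NormedSpace ℝ E] {s : Set E} {x z : E}

theorem Metric.infDist_lineMap_of_infDist_eq_dist (hz : z ∈ s) (hxz : infDist x s = dist x z)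
    {t : ℝ} (ht : t ∈ Icc (0 : ℝ) 1) : infDist (lineMap x z t) s = (1 - t) * dist x z := by
  apply le_antisymm
  · calc infDist (lineMap x z t) s ≤ dist (lineMap x z t) z := infDist_le_dist_of_mem hz
      _ = (1 - t) * dist x z := by
        rw [dist_lineMap_right, Real.norm_of_nonneg (sub_nonneg.2 ht.2)]
  · have := infDist_le_infDist_add_dist (x := x) (y := lineMap x z t) (s := s)
    rw [hxz, dist_comm x (lineMap x z t), dist_lineMap_left, Real.norm_of_nonneg ht.1] at this
    linarith

theorem HasFDerivAt.apply_sub_eq_neg_dist_of_infDist_eq_dist {f' : E →L[ℝ] ℝ}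
    (hf : HasFDerivAt (infDist · s) f' x) (hz : z ∈ s) (hxz : infDist x s = dist x z) :
    f' (z - x) = -dist x z := by
  have hline : HasDerivWithinAt (fun t : ℝ => infDist (lineMap x z t) s) (f' (z - x))
      (Ici 0) 0 :=
    (hf.comp_hasDerivAt_of_eq (0 : ℝ) hasDerivAt_lineMap (by simp)).hasDerivWithinAt
  have hsegment : HasDerivWithinAt (fun t : ℝ => infDist (lineMap x z t) s) (-dist x z)
      (Ici 0) 0 := by
    have hlin : HasDerivWithinAt (fun t : ℝ => (1 - t) * dist x z) (-dist x z) (Ici 0) 0 := by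
      simpa using ((hasDerivAt_id (0 : ℝ)).const_sub 1).mul_const (dist x z) |>.hasDerivWithinAt
    refine hlin.congr_of_eventuallyEq ?_ ?_
    · filter_upwards [Icc_mem_nhdsGE zero_lt_one] with t ht
      exact infDist_lineMap_of_infDist_eq_dist hz hxz ht
    · exact infDist_lineMap_of_infDist_eq_dist hz hxz ⟨le_rfl, zero_le_one⟩
  exact (uniqueDiffWithinAt_Ici 0).eq_deriv _ hline hsegment

theorem HasFDerivAt.norm_eq_one_of_infDist_eq_dist {f' : E →L[ℝ] ℝ}
    (hf : HasFDerivAt (infDist · s) f' x) (hz : z ∈ s) (hxz : infDist x s = dist x z)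
    (hx : x ≠ z) : ‖f'‖ = 1 := by
  refine le_antisymm (by simpa using hf.le_of_lipschitz (lipschitz_infDist_pt s)) ?_
  have hpos : 0 < ‖z - x‖ := norm_pos_iff.2 (sub_ne_zero.2 hx.symm)
  have := f'.le_opNorm (z - x)
  rw [hf.apply_sub_eq_neg_dist_of_infDist_eq_dist hz hxz, norm_neg,
    Real.norm_of_nonneg dist_nonneg, dist_comm, dist_eq_norm] at this
  exact (le_mul_iff_one_le_left hpos).1 this

theorem HasFDerivAt.norm_eq_one_of_infDist [ProperSpace E] {f' : E →L[ℝ] ℝ}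
    (hf : HasFDerivAt (infDist · s) f' x) (hne : s.Nonempty) (hcl : IsClosed s) (hx : x ∉ s) :
    ‖f'‖ = 1 := by
  obtain ⟨z, hz, hxz⟩ := hcl.exists_infDist_eq_dist hne x
  exact hf.norm_eq_one_of_infDist_eq_dist hz hxz (by rintro rfl; exact hx hz)

theorem Bornology.IsBounded.nonempty_frontier [Nontrivial E] (hb : Bornology.IsBounded s)
    (hne : s.Nonempty) : (frontier s).Nonempty :=
  nonempty_frontier_iff.2 ⟨hne, by rintro rfl; exact NormedSpace.unbounded_univ ℝ E hb⟩

end NormedSpace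

section SignedDistance

variable {d : ℕ} {Ω : Set (EuclideanSpace ℝ (Fin d))} {y : EuclideanSpace ℝ (Fin d)}

theorem sdf_eventuallyEq_of_mem_interior (hy : y ∈ interior Ω) :
    sdf Ω =ᶠ[𝓝 y] fun w => -infDist w (frontier Ω) := by
  filter_upwards [isOpen_interior.mem_nhds hy] with w hw
  simp [sdf, interior_subset hw]

theorem sdf_eventuallyEq_of_notMem_closure (hy : y ∉ closure Ω) :
    sdf Ω =ᶠ[𝓝 y] fun w => infDist w (frontier Ω) := by
  filter_upwards [isClosed_closure.isOpen_compl.mem_nhds hy] with w hw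
  have hwΩ : w ∉ Ω := fun h => hw (subset_closure h)
  simp [sdf, hwΩ]

theorem HasFDerivAt.norm_eq_one_of_sdf {g' : EuclideanSpace ℝ (Fin d) →L[ℝ] ℝ}
    (hg : HasFDerivAt (sdf Ω) g' y) (hΩ : (frontier Ω).Nonempty) (hy : y ∉ frontier Ω) :
    ‖g'‖ = 1 := by
  by_cases hint : y ∈ interior Ω
  · have hneg := (hg.congr_of_eventuallyEq (sdf_eventuallyEq_of_mem_interior hint).symm).fun_neg
    simp only [neg_neg] at hneg
    simpa using hneg.norm_eq_one_of_infDist hΩ isClosed_frontier hy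
  · exact (hg.congr_of_eventuallyEq (sdf_eventuallyEq_of_notMem_closure (hy ⟨·, hint⟩)).symm
      ).norm_eq_one_of_infDist hΩ isClosed_frontier hy

end SignedDistance

/-- if the distance function to a nonempty closed set `Γ` is
differentiable at a point `x ∉ Γ`, its derivative has norm `1`; consequently the SDF of
a nonempty bounded open set satisfies the Eikonal equation `‖∇φ‖ = 1` wherever it is
differentiable off the frontier. -/
theorem stmt_16 {d : ℕ} (Γ : Set (EuclideanSpace ℝ (Fin d)))
    (hne : Γ.Nonempty) (hcl : IsClosed Γ)
    (x : EuclideanSpace ℝ (Fin d)) (hx : x ∉ Γ)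
    (f' : EuclideanSpace ℝ (Fin d) →L[ℝ] ℝ)
    (hf : HasFDerivAt (fun y => Metric.infDist y Γ) f' x) :
    ‖f'‖ = 1 ∧
      ∀ (Ω₁ : Set (EuclideanSpace ℝ (Fin d))), Ω₁.Nonempty →
        Bornology.IsBounded Ω₁ → IsOpen Ω₁ →
        ∀ y ∉ frontier Ω₁, ∀ g' : EuclideanSpace ℝ (Fin d) →L[ℝ] ℝ,
          HasFDerivAt (sdf Ω₁) g' y → ‖g'‖ = 1 := by
  refine ⟨hf.norm_eq_one_of_infDist hne hcl hx, ?_⟩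
  intro Ω₁ hΩ₁ hbdd _ y hy g' hg
  obtain ⟨z, hz⟩ := hne
  have : Nontrivial (EuclideanSpace ℝ (Fin d)) := ⟨x, z, fun h => hx (h ▸ hz)⟩
  exact hg.norm_eq_one_of_sdf (hbdd.nonempty_frontier hΩ₁) hy
end
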